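/- Let d ≥ 1 and k ≥ 2 with d = 2^a for some a ≥ 0. Then (dk)!/(k!·(d!)^k) is odd. -/

import Mathlib

/-!
Legendre's formula `(p - 1) v_p(n!) = n - s_p(n)`, applied to
`(m n)! = uniformBell m n * (n!)^m * m!`, gives
`(p - 1) v_p(uniformBell m n) = m s_p(n) + s_p(m) - s_p(m n) - m`.
For `p = 2` and `n = 2^a` we have `s_2(n) = 1` and `s_2(m n) = s_2(m)`, so the valuation vanishes.
-/

open Nat

lemma Nat.digits_sum_base_pow_mul {b : ℕ} (hb : 1 < b) (k m : ℕ) :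
    (b.digits (b ^ k * m)).sum = (b.digits m).sum := by
  rcases m.eq_zero_or_pos with rfl | hm
  · simp
  · simp [digits_base_pow_mul hb hm]

lemma Nat.uniformBell_ne_zero (m n : ℕ) : uniformBell m n ≠ 0 := by
  rcases eq_or_ne n 0 with rfl | hn
  · simp [uniformBell_zero_right]
  · have h := uniformBell_mul_eq m hn ▸ factorial_ne_zero (m * n)
    exact left_ne_zero_of_mul (left_ne_zero_of_mul h)

lemma sub_one_mul_padicValNat_factorial_add_digits_sum (p : ℕ) [Fact p.Prime] (n : ℕ) :
    (p - 1) * padicValNat p n ! + (p.digits n).sum = n := by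
  have := digit_sum_le p n
  rw [sub_one_mul_padicValNat_factorial]
  omega

lemma sub_one_mul_padicValNat_uniformBell_add (p : ℕ) [Fact p.Prime] (m : ℕ) {n : ℕ}
    (hn : n ≠ 0) :
    (p - 1) * padicValNat p (uniformBell m n) + (p.digits (m * n)).sum + m =
      m * (p.digits n).sum + (p.digits m).sum := by
  have hv := congrArg (padicValNat p) (uniformBell_mul_eq m hn)
  rw [padicValNat.mul (mul_ne_zero (uniformBell_ne_zero m n) (by positivity))
    (factorial_ne_zero m), padicValNat.mul (uniformBell_ne_zero m n) (by positivity),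
    padicValNat.pow] at hv
  have hmn := sub_one_mul_padicValNat_factorial_add_digits_sum p (m * n)
  have hnm := congrArg (m * ·) (sub_one_mul_padicValNat_factorial_add_digits_sum p n)
  have hm := sub_one_mul_padicValNat_factorial_add_digits_sum p m
  rw [← hv] at hmn
  linarith

theorem stmt_18_general (d k a : ℕ) (ha : d = 2 ^ a) :
    Odd ((d * k).factorial / (k.factorial * d.factorial ^ k)) := by
  have hd : d ≠ 0 := ha ▸ by positivity
  rw [mul_comm d k, mul_comm k.factorial, ← uniformBell_eq_div k hd]
  have hv := sub_one_mul_padicValNat_uniformBell_add 2 k hd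
  have hsd : (digits 2 d).sum = 1 := by
    rw [ha, ← mul_one (2 ^ a), digits_sum_base_pow_mul one_lt_two]
    norm_num
  rw [ha, mul_comm k, digits_sum_base_pow_mul one_lt_two, ← ha, hsd] at hv
  have hv0 : padicValNat 2 (uniformBell k d) = 0 := by omega
  simp only [padicValNat.eq_zero_iff, uniformBell_ne_zero, false_or] at hv0
  exact Nat.odd_iff.mpr (Nat.two_dvd_ne_zero.mp (hv0.resolve_left (by norm_num)))

theorem stmt_18 (d k a : ℕ) (hd : 1 ≤ d) (hk : 2 ≤ k) (ha : d = 2 ^ a) :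
    Odd ((d * k).factorial / (k.factorial * d.factorial ^ k)) :=
  stmt_18_general d k a ha
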